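/- Let E be a finite-dimensional real inner product space (with its Borel σ-algebra), B : E → E a symmetric linear map, L a measurable label space, g : ℝ × L → ℝ a measurable function, and η ∈ ℝ. Define step : E × E × L → E by step(w, x, y) = w − η • (g(⟪w, x⟫, y)) • x. Let ν and μ₀ be probability measures on E and π a probability measure on L, and assume ν and μ₀ are each invariant under every orthogonal transformation of E commuting with B: for every linear isometry equivalence G : E ≃ E with G ∘ B = B ∘ G, Measure.map G ν = ν and Measure.map G μ₀ = μ₀. Define recursively μ_{t+1} = Measure.map (fun p => step(p.1, p.2.1, p.2.2)) (μ_t.prod (ν.prod π)). Then: (i) for every t ∈ ℕ and every linear isometry equivalence G : E ≃ E with G ∘ B = B ∘ G, Measure.map G μ_t = μ_t; and (ii) for every t with ∫ ‖w‖² dμ_t(w) < ∞, if C_t : E → E is a linear map satisfying ⟪C_t u, v⟫ = ∫ ⟪u, w⟫ · ⟪v, w⟫ dμ_t(w) for all u, v ∈ E, then C_t ∘ B = B ∘ C_t and there exists f_t : ℝ → ℝ such that C_t v = f_t(λ) • v for every λ ∈ ℝ and every v ∈ E with B v = λ • v. -/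

import Mathlib

open MeasureTheory Function
open scoped RealInnerProductSpace

/-!
An SGD step sees the weight `w` and the input `x` only through `⟪w, x⟫` and linear
combinations, so it is equivariant under every linear isometry `G`; since the labels are drawn
independently of the inputs, `G`-invariance of the data law and of `μ₀` propagates to every
`μ t`. The covariance operator of a `G`-invariant law commutes with `G`. For an eigenvector `v`
of `B`, the reflection in the line `ℝ ∙ v` commutes with `B` because `B` is symmetric, so
`C v ∈ ℝ ∙ v`. An operator mapping every vector of the eigenspace into its own line is a scalar
there, and an operator that is scalar on each eigenspace of `B` commutes with `B`.
-/

theorem MeasureTheory.Measure.map_map_prod_eq_of_semiconj {α β γ : Type*} [MeasurableSpace α]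
    [MeasurableSpace β] [MeasurableSpace γ] {μ : Measure α} {ν : Measure β} [SFinite μ]
    [SFinite ν] {f : α × β → γ} {F : α → α} {G : β → β} {H : γ → γ} (hf : Measurable f)
    (hF : Measurable F) (hG : Measurable G) (hH : Measurable H)
    (hfH : Semiconj f (Prod.map F G) H) (hμ : μ.map F = μ) (hν : ν.map G = ν) :
    ((μ.prod ν).map f).map H = (μ.prod ν).map f := by
  rw [Measure.map_map hH hf, ← hfH.comp_eq, ← Measure.map_map hf (hF.prodMap hG),
    ← Measure.map_prod_map _ _ hF hG, hμ, hν]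

section SGD

variable {E L : Type*} [NormedAddCommGroup E] [InnerProductSpace ℝ E]

def sgdStep (g : ℝ × L → ℝ) (η : ℝ) (p : E × E × L) : E :=
  p.1 - η • g (⟪p.1, p.2.1⟫, p.2.2) • p.2.1

theorem measurable_sgdStep [MeasurableSpace E] [BorelSpace E] [SecondCountableTopology E]
    [MeasurableSpace L] {g : ℝ × L → ℝ} (hg : Measurable g) (η : ℝ) :
    Measurable (sgdStep (E := E) g η) := by
  have hinner : Measurable fun p : E × E × L => ⟪p.1, p.2.1⟫ :=
    continuous_inner.measurable.comp (measurable_fst.prodMk measurable_snd.fst)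
  exact measurable_fst.sub
    (((hg.comp (hinner.prodMk measurable_snd.snd)).smul measurable_snd.fst).const_smul η)

theorem sgdStep_semiconj (g : ℝ × L → ℝ) (η : ℝ) (G : E ≃ₗᵢ[ℝ] E) :
    Semiconj (sgdStep g η) (Prod.map G (Prod.map G id)) G := fun p => by
  simp only [sgdStep, Prod.map_fst, Prod.map_snd, id_eq, LinearIsometryEquiv.inner_map_map,
    map_sub, map_smul]

theorem map_eq_self_of_sgd_recursion [MeasurableSpace E] [BorelSpace E]
    [SecondCountableTopology E] [MeasurableSpace L] {g : ℝ × L → ℝ} (hg : Measurable g) (η : ℝ)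
    {ν : Measure E} [SFinite ν] {π : Measure L} [SFinite π] {μ : ℕ → Measure E}
    [SFinite (μ 0)] (hrec : ∀ t, μ (t + 1) = ((μ t).prod (ν.prod π)).map (sgdStep g η))
    (G : E ≃ₗᵢ[ℝ] E) (hν : ν.map G = ν) (hμ₀ : (μ 0).map G = μ 0) (t : ℕ) :
    (μ t).map G = μ t := by
  have hG : Measurable G := G.continuous.measurable
  have hfin : ∀ t, SFinite (μ t) := fun t => by
    induction t with
    | zero => infer_instance
    | succ t _ => rw [hrec]; infer_instance
  induction t with
  | zero => exact hμ₀
  | succ t ih =>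
    have hνπ : (ν.prod π).map (Prod.map G id) = ν.prod π := by
      rw [← Measure.map_prod_map _ _ hG measurable_id, hν, Measure.map_id]
    rw [hrec]
    exact Measure.map_map_prod_eq_of_semiconj (measurable_sgdStep hg η) hG
      (hG.prodMap measurable_id) hG (sgdStep_semiconj g η G) ih hνπ

end SGD

section Covariance

variable {E : Type*} [NormedAddCommGroup E] [InnerProductSpace ℝ E]

theorem LinearIsometryEquiv.commute_of_covariance [MeasurableSpace E] [BorelSpace E]
    {μ : Measure E} {C : E →ₗ[ℝ] E} (hC : ∀ u v, ⟪C u, v⟫ = ∫ w, ⟪u, w⟫ * ⟪v, w⟫ ∂μ)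
    (G : E ≃ₗᵢ[ℝ] E) (hG : μ.map G = μ) (u : E) : C (G u) = G (C u) := by
  refine ext_inner_right ℝ fun v => ?_
  have hvG : v = G (G.symm v) := (G.apply_symm_apply v).symm
  calc ⟪C (G u), v⟫ = ∫ w, ⟪G u, G w⟫ * ⟪v, G w⟫ ∂μ := by
        conv_lhs => rw [hC, ← hG]
        exact integral_map G.continuous.measurable.aemeasurable
          (by fun_prop : Continuous fun w => ⟪G u, w⟫ * ⟪v, w⟫).aestronglyMeasurable
    _ = ⟪C u, G.symm v⟫ := by
        rw [hC]
        congr 1 with w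
        rw [G.inner_map_map, hvG, G.inner_map_map, G.symm_apply_apply]
    _ = ⟪G (C u), v⟫ := by rw [hvG, G.inner_map_map, G.symm_apply_apply]

theorem reflection_span_singleton_commute_of_eigenvector {B : E →ₗ[ℝ] E} (hB : B.IsSymmetric)
    {v : E} {l : ℝ} (hv : B v = l • v) (w : E) :
    (ℝ ∙ v).reflection (B w) = B ((ℝ ∙ v).reflection w) := by
  have hproj : (ℝ ∙ v).starProjection (B w) = B ((ℝ ∙ v).starProjection w) := by
    rw [Submodule.starProjection_singleton, Submodule.starProjection_singleton, map_smul, hv,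
      ← hB, hv, real_inner_smul_left, smul_smul]
    congr 1
    ring
  rw [Submodule.reflection_apply, Submodule.reflection_apply, map_sub, hproj, map_nsmul]

theorem Submodule.mem_of_commute_reflection {K : Submodule ℝ E} [K.HasOrthogonalProjection]
    {C : E →ₗ[ℝ] E} {x : E} (hx : x ∈ K) (hC : C (K.reflection x) = K.reflection (C x)) :
    C x ∈ K := by
  rwa [Submodule.reflection_mem_subspace_eq_self hx, eq_comm,
    Submodule.reflection_eq_self_iff] at hC

theorem Submodule.exists_eq_smul_of_forall_mem_span_singleton {V : Type*} [AddCommGroup V]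
    [Module ℝ V] {p : Submodule ℝ V} {C : V →ₗ[ℝ] V} (hC : ∀ v ∈ p, C v ∈ ℝ ∙ v) :
    ∃ c : ℝ, ∀ v ∈ p, C v = c • v := by
  have hp : ∀ v ∈ p, C v ∈ p := fun v hv => by
    obtain ⟨c, hc⟩ := Submodule.mem_span_singleton.mp (hC v hv)
    exact hc ▸ p.smul_mem c hv
  obtain ⟨c, hc⟩ := (C.restrict hp).exists_eq_smul_id_of_forall_notLinearIndependent fun v => by
    obtain ⟨c, hc⟩ := Submodule.mem_span_singleton.mp (hC v v.2)
    rw [LinearIndependent.pair_iff]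
    intro h
    simpa using (h c (-1) (by ext; simp [hc])).2
  exact ⟨c, fun v hv => congrArg Subtype.val (LinearMap.congr_fun hc ⟨v, hv⟩)⟩

theorem exists_eigenvalue_smul_of_forall_commute {B C : E →ₗ[ℝ] E} (hB : B.IsSymmetric)
    (hC : ∀ G : E ≃ₗᵢ[ℝ] E, (∀ w, G (B w) = B (G w)) → ∀ u, C (G u) = G (C u)) :
    ∃ f : ℝ → ℝ, ∀ (l : ℝ) (v : E), B v = l • v → C v = f l • v := by
  have hline : ∀ l, ∀ v ∈ Module.End.eigenspace B l, C v ∈ ℝ ∙ v := fun l v hv =>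
    have hBv : B v = l • v := Module.End.mem_eigenspace_iff.mp hv
    Submodule.mem_of_commute_reflection (Submodule.mem_span_singleton_self v)
      (hC _ (reflection_span_singleton_commute_of_eigenvector hB hBv) v)
  choose f hf using fun l => Submodule.exists_eq_smul_of_forall_mem_span_singleton (hline l)
  exact ⟨f, fun l v hv => hf l v (Module.End.mem_eigenspace_iff.mpr hv)⟩

theorem LinearMap.IsSymmetric.commute_of_eigenvector_smul [FiniteDimensional ℝ E]
    {B C : E →ₗ[ℝ] E} (hB : B.IsSymmetric) {f : ℝ → ℝ}
    (hf : ∀ (l : ℝ) (v : E), B v = l • v → C v = f l • v) (w : E) : C (B w) = B (C w) := by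
  have hn : Module.finrank ℝ E = Module.finrank ℝ E := rfl
  suffices C ∘ₗ B = B ∘ₗ C from LinearMap.congr_fun this w
  refine (hB.eigenvectorBasis hn).toBasis.ext fun i => ?_
  have he := hB.apply_eigenvectorBasis hn i
  simp only [OrthonormalBasis.coe_toBasis, LinearMap.comp_apply, he, map_smul, hf _ _ he]
  exact smul_comm _ _ _

end Covariance

/-- Random-label training induces covariance alignment: if the data law `ν` and the
initial weight law `μ₀` are invariant under every orthogonal transformation commuting
with the symmetric map `B`, then so is the weight law `μ t` after `t` SGD steps with
input-independent labels, and consequently the covariance operator `C t` of `μ t`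
commutes with `B` and acts as a scalar transfer function `f t λ` on each eigenspace
of `B`. -/
theorem stmt_18 {E L : Type*} [NormedAddCommGroup E] [InnerProductSpace ℝ E]
    [FiniteDimensional ℝ E] [MeasurableSpace E] [BorelSpace E] [MeasurableSpace L]
    (B : E →ₗ[ℝ] E) (hB : ∀ u v : E, ⟪B u, v⟫ = ⟪u, B v⟫)
    (g : ℝ × L → ℝ) (hg : Measurable g) (η : ℝ)
    (step : E × E × L → E)
    (hstep : ∀ (w x : E) (y : L), step (w, x, y) = w - η • (g (⟪w, x⟫, y)) • x)
    (ν : Measure E) [IsProbabilityMeasure ν]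
    (μ₀ : Measure E) [IsProbabilityMeasure μ₀]
    (π : Measure L) [IsProbabilityMeasure π]
    (hν : ∀ G : E ≃ₗᵢ[ℝ] E, (∀ w : E, G (B w) = B (G w)) → Measure.map G ν = ν)
    (hμ₀ : ∀ G : E ≃ₗᵢ[ℝ] E, (∀ w : E, G (B w) = B (G w)) → Measure.map G μ₀ = μ₀)
    (μ : ℕ → Measure E) (hinit : μ 0 = μ₀)
    (hrec : ∀ t : ℕ, μ (t + 1) =
      Measure.map (fun p : E × E × L => step (p.1, p.2.1, p.2.2)) ((μ t).prod (ν.prod π))) :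
    (∀ (t : ℕ) (G : E ≃ₗᵢ[ℝ] E), (∀ w : E, G (B w) = B (G w)) →
      Measure.map G (μ t) = μ t) ∧
    (∀ t : ℕ, Integrable (fun w : E => ‖w‖ ^ 2) (μ t) →
      ∀ C : E →ₗ[ℝ] E, (∀ u v : E, ⟪C u, v⟫ = ∫ w, ⟪u, w⟫ * ⟪v, w⟫ ∂(μ t)) →
        (∀ w : E, C (B w) = B (C w)) ∧
        ∃ f : ℝ → ℝ, ∀ (l : ℝ) (v : E), B v = l • v → C v = f l • v) := by
  have hstep' : (fun p : E × E × L => step (p.1, p.2.1, p.2.2)) = sgdStep g η :=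
    funext fun p => hstep p.1 p.2.1 p.2.2
  simp only [hstep'] at hrec
  have : SFinite (μ 0) := hinit ▸ inferInstance
  have hinv : ∀ (t : ℕ) (G : E ≃ₗᵢ[ℝ] E), (∀ w : E, G (B w) = B (G w)) →
      (μ t).map G = μ t := fun t G hG =>
    map_eq_self_of_sgd_recursion hg η hrec G (hν G hG) (hinit ▸ hμ₀ G hG) t
  refine ⟨hinv, fun t _ C hC => ?_⟩
  obtain ⟨f, hf⟩ := exists_eigenvalue_smul_of_forall_commute hB fun G hG =>
    G.commute_of_covariance hC (hinv t G hG)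
  exact ⟨LinearMap.IsSymmetric.commute_of_eigenvector_smul hB hf, f, hf⟩
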